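/- arXiv:2503.09538 — 2 statements merged into one kernel-verified Lean document; each statement's English description precedes it below -/
import Mathlib

section
/- Let G be a finite undirected graph on N vertices with every vertex having degree at least 1, and let d(i) = |N(i)| denote the degree of vertex i. If τ_i = c/d(i) for a constant c > 0, then (1/N) Σ_{i=1}^N (1/d(i)) Σ_{j ∈ N(i)} τ_j ≤ c / N̄, where N̄ = N / (Σ_{i=1}^N 1/d(i)) is the harmonic mean of the degrees. -/
open Finset

/-- Bound on the degree-weighted average of the regularizers `τ_j = c / deg j`
over neighborhoods: `(1/N) Σ_i (1/deg i) Σ_{j ∈ N(i)} τ_j ≤ c / N̄`, where `N̄`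
is the harmonic mean of the degrees. -/
theorem tau_neighbor_avg_bound {N : ℕ} (hN : 0 < N) (G : SimpleGraph (Fin N))
    [DecidableRel G.Adj] (hdeg : ∀ i, 1 ≤ G.degree i) (c : ℝ) (hc : 0 < c) :
    (1 / (N : ℝ)) * ∑ i, (1 / (G.degree i : ℝ)) *
        ∑ j ∈ G.neighborFinset i, c / (G.degree j : ℝ) ≤
      c / ((N : ℝ) / ∑ i, (1 / (G.degree i : ℝ))) := by
  have hd : ∀ i, (0:ℝ) < (G.degree i : ℝ) := fun i => by exact_mod_cast hdeg i
  have hNpos : (0:ℝ) < N := by exact_mod_cast hN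
  have hT : 0 < ∑ i, (1 / (G.degree i : ℝ)) := by
    apply Finset.sum_pos
    · intro i _
      have := hd i
      positivity
    · exact ⟨⟨0, hN⟩, mem_univ _⟩
  -- swap lemma
  have swap : ∀ (g : Fin N → ℝ), ∑ i, ∑ j ∈ G.neighborFinset i, g j
      = ∑ j, (G.degree j : ℝ) * g j := by
    intro g
    have h1 : ∀ i : Fin N, ∑ j ∈ G.neighborFinset i, g j
        = ∑ j, if G.Adj i j then g j else 0 := by
      intro i
      rw [SimpleGraph.neighborFinset_eq_filter, Finset.sum_filter]
    simp only [h1]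
    rw [Finset.sum_comm]
    refine Finset.sum_congr rfl fun j _ => ?_
    have : ∀ i : Fin N, (if G.Adj i j then g j else 0) = (if G.Adj j i then g j else 0) := by
      intro i; simp [SimpleGraph.adj_comm]
    simp only [this]
    rw [← Finset.sum_filter, ← SimpleGraph.neighborFinset_eq_filter,
      Finset.sum_const, SimpleGraph.card_neighborFinset_eq_degree]
    simp [mul_comm]
  -- key bound
  have key : ∑ i, (1 / (G.degree i : ℝ)) * ∑ j ∈ G.neighborFinset i, c / (G.degree j : ℝ)
      ≤ c * ∑ i, (1 / (G.degree i : ℝ)) := by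
    have step1 : ∑ i, (1 / (G.degree i : ℝ)) * ∑ j ∈ G.neighborFinset i, c / (G.degree j : ℝ)
        ≤ ∑ i, ∑ j ∈ G.neighborFinset i,
            (c / (2 * (G.degree i : ℝ)^2) + c / (2 * (G.degree j : ℝ)^2)) := by
      refine Finset.sum_le_sum fun i _ => ?_
      rw [Finset.mul_sum]
      refine Finset.sum_le_sum fun j _ => ?_
      have hdi := hd i; have hdj := hd j
      rw [show (1:ℝ)/(G.degree i : ℝ) * (c / (G.degree j : ℝ))
          = c / ((G.degree i : ℝ) * (G.degree j : ℝ)) by field_simp,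
        div_add_div _ _ (by positivity) (by positivity),
        div_le_div_iff₀ (by positivity) (by positivity)]
      nlinarith [mul_nonneg hc.le (sq_nonneg ((G.degree i : ℝ) - (G.degree j : ℝ))),
        mul_pos hdi hdj, sq_nonneg ((G.degree i : ℝ) * (G.degree j : ℝ))]
    have split : ∑ i, ∑ j ∈ G.neighborFinset i,
          (c / (2 * (G.degree i : ℝ)^2) + c / (2 * (G.degree j : ℝ)^2))
        = ∑ i, ∑ j ∈ G.neighborFinset i, c / (2 * (G.degree i : ℝ)^2)
          + ∑ i, ∑ j ∈ G.neighborFinset i, c / (2 * (G.degree j : ℝ)^2) := by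
      rw [← Finset.sum_add_distrib]
      exact Finset.sum_congr rfl fun i _ => by rw [Finset.sum_add_distrib]
    have first : ∑ i, ∑ j ∈ G.neighborFinset i, c / (2 * (G.degree i : ℝ)^2)
        = (c/2) * ∑ i, (1 / (G.degree i : ℝ)) := by
      rw [Finset.mul_sum]
      refine Finset.sum_congr rfl fun i _ => ?_
      rw [Finset.sum_const, SimpleGraph.card_neighborFinset_eq_degree]
      have := hd i
      field_simp
      rw [nsmul_eq_mul]
      field_simp
    have second : ∑ i, ∑ j ∈ G.neighborFinset i, c / (2 * (G.degree j : ℝ)^2)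
        = (c/2) * ∑ i, (1 / (G.degree i : ℝ)) := by
      rw [swap (fun j => c / (2 * (G.degree j : ℝ)^2)), Finset.mul_sum]
      refine Finset.sum_congr rfl fun j _ => ?_
      have := hd j
      field_simp
    calc _ ≤ _ := step1
    _ = (c/2) * ∑ i, (1 / (G.degree i : ℝ)) + (c/2) * ∑ i, (1 / (G.degree i : ℝ)) := by
        rw [split, first, second]
    _ = c * ∑ i, (1 / (G.degree i : ℝ)) := by ring
  have hTne : (∑ i, (1 / (G.degree i : ℝ))) ≠ 0 := ne_of_gt hT
  have hNne : (N:ℝ) ≠ 0 := ne_of_gt hNpos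
  calc (1 / (N : ℝ)) * ∑ i, (1 / (G.degree i : ℝ)) *
        ∑ j ∈ G.neighborFinset i, c / (G.degree j : ℝ)
      ≤ (1 / (N : ℝ)) * (c * ∑ i, (1 / (G.degree i : ℝ))) := by
        apply mul_le_mul_of_nonneg_left key (by positivity)
    _ = c / ((N : ℝ) / ∑ i, (1 / (G.degree i : ℝ))) := by
        field_simp
end

section
/- Let Δ ⊆ ℝᵈ be the probability simplex, η > 0, τ > 0, and suppose two sequences (π^(t)) and (π'^(t)) both start from the same point π^(0) = π'^(0) ∈ Δ and are updated by π^(t+1) = Proj_Δ((Proj_Δ(π^(t) + n^(t)) − η g^(t))/(1 + ητ)) and π'^(t+1) = Proj_Δ((Proj_Δ(π'^(t) + n^(t)) − η g'^(t))/(1 + ητ)), with the same noise vectors n^(t) but possibly different gradient vectors g^(t), g'^(t) each with all entries in [−1, 1]. Then for every t ≥ 0, ‖π^(t) − π'^(t)‖ ≤ 2√d / τ. -/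
open scoped RealInnerProductSpace

/-- The probability simplex in `ℝᵈ` (viewed inside Euclidean space). -/
def simplexSet (d : ℕ) : Set (EuclideanSpace ℝ (Fin d)) :=
  {x | (∀ i, 0 ≤ x i) ∧ ∑ i, x i = 1}

lemma simplexSet_convex (d : ℕ) : Convex ℝ (simplexSet d) := by
  intro x hx y hy a b ha hb hab
  refine ⟨fun i => ?_, ?_⟩
  · have := hx.1 i; have := hy.1 i
    simp only [PiLp.add_apply, PiLp.smul_apply, smul_eq_mul]
    positivity
  · simp only [PiLp.add_apply, PiLp.smul_apply, smul_eq_mul]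
    rw [Finset.sum_add_distrib, ← Finset.mul_sum, ← Finset.mul_sum, hx.2, hy.2]
    simpa using hab

lemma proj_inner {d : ℕ} (P : EuclideanSpace ℝ (Fin d) → EuclideanSpace ℝ (Fin d))
    (hP : ∀ z, P z ∈ simplexSet d ∧ ∀ w ∈ simplexSet d, ‖P z - z‖ ≤ ‖w - z‖)
    (z : EuclideanSpace ℝ (Fin d)) :
    ∀ w ∈ simplexSet d, ⟪z - P z, w - P z⟫ ≤ 0 := by
  rw [← norm_eq_iInf_iff_real_inner_le_zero (simplexSet_convex d) (hP z).1]
  haveI : Nonempty (simplexSet d) := ⟨⟨P z, (hP z).1⟩⟩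
  refine le_antisymm (le_ciInf fun w => ?_)
    (ciInf_le ⟨0, fun _ ⟨_, h⟩ => h ▸ norm_nonneg _⟩ (⟨P z, (hP z).1⟩ : simplexSet d))
  rw [norm_sub_rev, norm_sub_rev z]
  exact (hP z).2 w w.2

lemma proj_nonexpansive {d : ℕ} (P : EuclideanSpace ℝ (Fin d) → EuclideanSpace ℝ (Fin d))
    (hP : ∀ z, P z ∈ simplexSet d ∧ ∀ w ∈ simplexSet d, ‖P z - z‖ ≤ ‖w - z‖)
    (a b : EuclideanSpace ℝ (Fin d)) : ‖P a - P b‖ ≤ ‖a - b‖ := by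
  have h1 := proj_inner P hP a (P b) (hP b).1
  have h2 := proj_inner P hP b (P a) (hP a).1
  have key : ‖P a - P b‖ ^ 2 ≤ ⟪a - b, P a - P b⟫ := by
    have : ⟪P a - P b, P a - P b⟫ ≤ ⟪a - b, P a - P b⟫ := by
      have := add_nonpos h1 h2
      have expand : ⟪a - P a, P b - P a⟫ + ⟪b - P b, P a - P b⟫
          = ⟪a - b, P b - P a⟫ + ⟪P a - P b, P a - P b⟫ := by
        simp only [inner_sub_left, inner_sub_right, real_inner_comm]
        ring
      have hneg : ⟪a - b, P b - P a⟫ = -⟪a - b, P a - P b⟫ := by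
        rw [← inner_neg_right]; congr 1; abel
      rw [expand, hneg] at this
      linarith
    calc ‖P a - P b‖ ^ 2 = ⟪P a - P b, P a - P b⟫ := (real_inner_self_eq_norm_sq _).symm
      _ ≤ _ := this
  have := real_inner_le_norm (a - b) (P a - P b)
  nlinarith [norm_nonneg (P a - P b), norm_nonneg (a - b)]

/-- Sensitivity bound for the regularized noisy proximal-gradient recursion:
two trajectories driven by the same noise but different bounded gradients stay
within `2√d / τ` of each other. -/
theorem regularized_iterates_sensitivity {d : ℕ} (η τ : ℝ) (hη : 0 < η) (hτ : 0 < τ)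
    (P : EuclideanSpace ℝ (Fin d) → EuclideanSpace ℝ (Fin d))
    (hP : ∀ z, P z ∈ simplexSet d ∧ ∀ w ∈ simplexSet d, ‖P z - z‖ ≤ ‖w - z‖)
    (π π' nseq g g' : ℕ → EuclideanSpace ℝ (Fin d))
    (hg : ∀ t i, |g t i| ≤ 1) (hg' : ∀ t i, |g' t i| ≤ 1)
    (h0 : π 0 = π' 0) (h0mem : π 0 ∈ simplexSet d)
    (hrec : ∀ t, π (t + 1) = P ((1 + η * τ)⁻¹ • (P (π t + nseq t) - η • g t)))
    (hrec' : ∀ t, π' (t + 1) = P ((1 + η * τ)⁻¹ • (P (π' t + nseq t) - η • g' t))) :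
    ∀ t, ‖π t - π' t‖ ≤ 2 * Real.sqrt d / τ := by
  have hd : (0:ℝ) ≤ Real.sqrt d := Real.sqrt_nonneg _
  have hfac : (0:ℝ) < 1 + η * τ := by nlinarith
  have hgbound : ∀ t, ‖g t - g' t‖ ≤ 2 * Real.sqrt d := by
    intro t
    have : ‖g t - g' t‖ ≤ Real.sqrt (∑ _i : Fin d, (2:ℝ)^2) := by
      rw [EuclideanSpace.norm_eq]
      apply Real.sqrt_le_sqrt
      apply Finset.sum_le_sum
      intro i _
      have h1 := hg t i; have h2 := hg' t i
      have : |g t i - g' t i| ≤ 2 := by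
        have := abs_sub_abs_le_abs_sub (g t i) (g' t i)
        have := abs_sub (g t i) (g' t i)
        calc |g t i - g' t i| ≤ |g t i| + |g' t i| := abs_sub _ _
          _ ≤ 2 := by linarith
      calc ‖(g t - g' t) i‖ ^ 2 = |g t i - g' t i| ^ 2 := by
            simp [PiLp.sub_apply, Real.norm_eq_abs]
        _ ≤ 2 ^ 2 := by nlinarith [abs_nonneg (g t i - g' t i)]
    calc ‖g t - g' t‖ ≤ Real.sqrt (∑ _i : Fin d, (2:ℝ)^2) := this
      _ = 2 * Real.sqrt d := by
          rw [Finset.sum_const, Finset.card_univ, Fintype.card_fin, nsmul_eq_mul,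
            show (d:ℝ) * 2^2 = 2^2 * d by ring, Real.sqrt_mul (by norm_num)]
          rw [Real.sqrt_sq (by norm_num : (0:ℝ) ≤ 2)]
  intro t
  induction t with
  | zero =>
    rw [h0]; simp only [sub_self, norm_zero]; positivity
  | succ t ih =>
    rw [hrec, hrec']
    calc ‖P ((1 + η * τ)⁻¹ • (P (π t + nseq t) - η • g t))
          - P ((1 + η * τ)⁻¹ • (P (π' t + nseq t) - η • g' t))‖
        ≤ ‖(1 + η * τ)⁻¹ • (P (π t + nseq t) - η • g t)
          - (1 + η * τ)⁻¹ • (P (π' t + nseq t) - η • g' t)‖ := proj_nonexpansive P hP _ _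
      _ = (1 + η * τ)⁻¹ * ‖(P (π t + nseq t) - η • g t) - (P (π' t + nseq t) - η • g' t)‖ := by
          rw [← smul_sub, norm_smul, Real.norm_eq_abs, abs_of_pos (by positivity)]
      _ ≤ (1 + η * τ)⁻¹ * (‖P (π t + nseq t) - P (π' t + nseq t)‖ + η * ‖g t - g' t‖) := by
          gcongr
          calc ‖(P (π t + nseq t) - η • g t) - (P (π' t + nseq t) - η • g' t)‖
              = ‖(P (π t + nseq t) - P (π' t + nseq t)) + (η • g' t - η • g t)‖ := by
                congr 1
                abel
            _ ≤ ‖P (π t + nseq t) - P (π' t + nseq t)‖ + ‖η • g' t - η • g t‖ := norm_add_le _ _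
            _ = ‖P (π t + nseq t) - P (π' t + nseq t)‖ + η * ‖g t - g' t‖ := by
                rw [← smul_sub, norm_smul, Real.norm_eq_abs, abs_of_pos hη, norm_sub_rev (g' t)]
      _ ≤ (1 + η * τ)⁻¹ * (‖π t - π' t‖ + η * (2 * Real.sqrt d)) := by
          gcongr
          · have := proj_nonexpansive P hP (π t + nseq t) (π' t + nseq t)
            simpa using this
          · exact hgbound t
      _ ≤ (1 + η * τ)⁻¹ * (2 * Real.sqrt d / τ + η * (2 * Real.sqrt d)) := by gcongr
      _ = 2 * Real.sqrt d / τ := by field_simp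
end
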